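/- For r ∈ (0,1), ∫_{−π/2}^{π/2} cos φ · ln( r cos φ + √(1 − r² sin²φ) ) dφ = ln(1 − r²) + (2/r)(K(r) − E(r)), where K and E are the complete elliptic integrals of the first and second kind. -/

import Mathlib

/-!
Integrate by parts against `sin φ`. Since `|r cos φ| < √(1 - r² sin² φ)`, the logarithm is smooth,
with derivative `-r sin φ / √(1 - r² sin² φ)`; both boundary terms equal `log √(1 - r²)`. The
remaining integral of `sin² φ / √(1 - r² sin² φ)` is even in `φ`, and `r²` times its value on
`[0, π/2]` is `K(r) - E(r)`, because `1/√g - √g = r² sin² φ / √g` for `g = 1 - r² sin² φ`.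
-/

open Real intervalIntegral

/-- The complete elliptic integral of the second kind. -/
noncomputable def ellipticE (k : ℝ) : ℝ :=
  ∫ θ in (0:ℝ)..(π / 2), Real.sqrt (1 - k ^ 2 * (sin θ) ^ 2)

/-- The complete elliptic integral of the first kind. -/
noncomputable def ellipticK (k : ℝ) : ℝ :=
  ∫ θ in (0:ℝ)..(π / 2), 1 / Real.sqrt (1 - k ^ 2 * (sin θ) ^ 2)

theorem intervalIntegral.integral_neg_self_eq_two_mul_of_even {f : ℝ → ℝ}
    (hf : ∀ x, f (-x) = f x) {a : ℝ} (hfi : IntervalIntegrable f MeasureTheory.volume 0 a) :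
    ∫ x in -a..a, f x = 2 * ∫ x in 0..a, f x := by
  have hneg : ∫ x in -a..0, f x = ∫ x in 0..a, f x := by
    simpa [hf] using (integral_comp_neg (a := 0) (b := a) (f := f)).symm
  have hfi' : IntervalIntegrable f MeasureTheory.volume (-a) 0 := by
    simpa [hf] using ((IntervalIntegrable.iff_comp_neg).mp hfi).symm
  rw [← integral_add_adjacent_intervals hfi' hfi, hneg, two_mul]

section

variable {k : ℝ}

theorem one_sub_sq_mul_sin_sq_pos (hk : k ^ 2 < 1) (θ : ℝ) : 0 < 1 - k ^ 2 * sin θ ^ 2 := by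
  nlinarith [sin_sq_le_one θ, sq_nonneg (sin θ)]

theorem sqrt_one_sub_sq_mul_sin_sq_ne_zero (hk : k ^ 2 < 1) (θ : ℝ) :
    √(1 - k ^ 2 * sin θ ^ 2) ≠ 0 :=
  (sqrt_pos.2 (one_sub_sq_mul_sin_sq_pos hk θ)).ne'

theorem continuous_sin_sq_div_sqrt (hk : k ^ 2 < 1) :
    Continuous fun θ ↦ sin θ ^ 2 / √(1 - k ^ 2 * sin θ ^ 2) :=
  (by fun_prop : Continuous _).div (by fun_prop) (sqrt_one_sub_sq_mul_sin_sq_ne_zero hk)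

theorem ellipticK_sub_ellipticE (hk : k ^ 2 < 1) :
    ellipticK k - ellipticE k =
      k ^ 2 * ∫ θ in (0:ℝ)..(π / 2), sin θ ^ 2 / √(1 - k ^ 2 * sin θ ^ 2) := by
  have hK : Continuous fun θ ↦ 1 / √(1 - k ^ 2 * sin θ ^ 2) :=
    continuous_const.div (by fun_prop) (sqrt_one_sub_sq_mul_sin_sq_ne_zero hk)
  rw [ellipticK, ellipticE, ← integral_sub (hK.intervalIntegrable _ _)
    ((by fun_prop : Continuous _).intervalIntegrable _ _), ← integral_const_mul]
  refine integral_congr fun θ _ ↦ ?_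
  have hsq : √(1 - k ^ 2 * sin θ ^ 2) ^ 2 = 1 - k ^ 2 * sin θ ^ 2 :=
    sq_sqrt (one_sub_sq_mul_sin_sq_pos hk θ).le
  have hs := sqrt_one_sub_sq_mul_sin_sq_ne_zero hk θ
  field_simp
  linear_combination -hsq

theorem mul_cos_add_sqrt_pos (hk : k ^ 2 < 1) (φ : ℝ) :
    0 < k * cos φ + √(1 - k ^ 2 * sin φ ^ 2) := by
  have : |k * cos φ| < √(1 - k ^ 2 * sin φ ^ 2) := by
    rw [lt_sqrt (abs_nonneg _), sq_abs]
    nlinarith [sin_sq_add_cos_sq φ, sq_nonneg (sin φ)]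
  linarith [neg_abs_le (k * cos φ)]

theorem hasDerivAt_log_mul_cos_add_sqrt (hk : k ^ 2 < 1) (φ : ℝ) :
    HasDerivAt (fun x ↦ log (k * cos x + √(1 - k ^ 2 * sin x ^ 2)))
      (-(k * sin φ) / √(1 - k ^ 2 * sin φ ^ 2)) φ := by
  have hsqrt : HasDerivAt (fun x ↦ √(1 - k ^ 2 * sin x ^ 2))
      ((-(k ^ 2 * (2 * sin φ * cos φ))) / (2 * √(1 - k ^ 2 * sin φ ^ 2))) φ := by
    have := (((hasDerivAt_sin φ).pow 2).const_mul (k ^ 2)).const_sub 1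
    simpa using this.sqrt (one_sub_sq_mul_sin_sq_pos hk φ).ne'
  refine ((((hasDerivAt_cos φ).const_mul k).add hsqrt).log
    (mul_cos_add_sqrt_pos hk φ).ne').congr_deriv ?_
  have hs := sqrt_one_sub_sq_mul_sin_sq_ne_zero hk φ
  have hpos := (mul_cos_add_sqrt_pos hk φ).ne'
  simp only [Pi.add_apply]
  field_simp
  ring

theorem integral_cos_mul_log_mul_cos_add_sqrt (hk : k ^ 2 < 1) :
    ∫ φ in -(π / 2)..π / 2, cos φ * log (k * cos φ + √(1 - k ^ 2 * sin φ ^ 2)) =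
      log (1 - k ^ 2) + 2 * k * ∫ θ in (0:ℝ)..(π / 2), sin θ ^ 2 / √(1 - k ^ 2 * sin θ ^ 2) := by
  have hparts := integral_mul_deriv_eq_deriv_mul (a := -(π / 2)) (b := π / 2)
    (fun φ _ ↦ hasDerivAt_log_mul_cos_add_sqrt hk φ) (fun φ _ ↦ hasDerivAt_sin φ)
    (((by fun_prop : Continuous fun φ ↦ -(k * sin φ)).div (by fun_prop)
      (sqrt_one_sub_sq_mul_sin_sq_ne_zero hk)).intervalIntegrable _ _)
    (continuous_cos.intervalIntegrable _ _)
  have hboundary :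
      log (k * cos (π / 2) + √(1 - k ^ 2 * sin (π / 2) ^ 2)) = log (1 - k ^ 2) / 2 := by
    rw [cos_pi_div_two, sin_pi_div_two, mul_zero, zero_add, one_pow, mul_one,
      log_sqrt (by linarith)]
  have hrest : ∫ φ in -(π / 2)..π / 2, -(k * sin φ) / √(1 - k ^ 2 * sin φ ^ 2) * sin φ =
      -k * ∫ φ in -(π / 2)..π / 2, sin φ ^ 2 / √(1 - k ^ 2 * sin φ ^ 2) := by
    rw [← integral_const_mul]
    exact integral_congr fun φ _ ↦ by ring
  rw [integral_neg_self_eq_two_mul_of_even (fun φ ↦ by simp)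
    ((continuous_sin_sq_div_sqrt hk).intervalIntegrable _ _)] at hrest
  simp only [mul_comm (cos _)]
  rw [hparts, hrest, cos_neg, sin_neg, neg_sq, hboundary, sin_pi_div_two]
  ring

end

/-- An explicit logarithmic integral in terms of complete elliptic integrals. -/
theorem integral_cos_log_eq (r : ℝ) (hr : r ∈ Set.Ioo (0:ℝ) 1) :
    (∫ φ in (-(π/2))..(π/2),
        cos φ * Real.log (r * cos φ + Real.sqrt (1 - r ^ 2 * (sin φ) ^ 2)))
      = Real.log (1 - r ^ 2) + (2 / r) * (ellipticK r - ellipticE r) := by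
  have hr2 : r ^ 2 < 1 := by nlinarith [hr.1, hr.2]
  rw [integral_cos_mul_log_mul_cos_add_sqrt hr2, ellipticK_sub_ellipticE hr2]
  field_simp [hr.1.ne']
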